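/- Define 𝐃₀′ = { gen(ρ,η) : ρ, η nondecreasing real sequences indexed by n ≥ 1 with ρ_n ≤ n and η_n ≤ n for all n ≥ 1 and ρ_1 + η_1 ≥ 1 } and 𝐃₀″ = { gen(ρ,η) : ρ, η nondecreasing real sequences indexed by n ≥ 1 with ρ_1 = η_1 ∈ [1/2, 1] and ρ_n + η_m ≤ n + m for all n, m ≥ 1 }. Then 𝐃₀′ = 𝐃₀″ as sets of functions on ℤ. -/
import Mathlib


/-- The function on `ℤ` generated by two real sequences `(ρ_n)_{n≥1}` and `(η_n)_{n≥1}`: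
`gen(ρ,η)(n) = ρ_{n+1} − ρ_n` for `n > 0`, `gen(ρ,η)(0) = ρ_1 + η_1 − 1`, and
`gen(ρ,η)(n) = η_{−n+1} − η_{−n}` for `n < 0`. -/
noncomputable def gen (ρ η : ℕ → ℝ) (n : ℤ) : ℝ :=
  if 0 < n then ρ (n.toNat + 1) - ρ n.toNat
  else if n = 0 then ρ 1 + η 1 - 1
  else η ((-n).toNat + 1) - η ((-n).toNat)

/-- `𝐃₀′`: functions generated by nondecreasing sequences with `ρ_n ≤ n`, `η_n ≤ n`
(for `n ≥ 1`) and `ρ_1 + η_1 ≥ 1`. -/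
def D0' : Set (ℤ → ℝ) :=
  {f | ∃ ρ η : ℕ → ℝ,
    (∀ n : ℕ, 1 ≤ n → ρ n ≤ ρ (n + 1)) ∧ (∀ n : ℕ, 1 ≤ n → η n ≤ η (n + 1)) ∧
    (∀ n : ℕ, 1 ≤ n → ρ n ≤ n) ∧ (∀ n : ℕ, 1 ≤ n → η n ≤ n) ∧
    1 ≤ ρ 1 + η 1 ∧ f = gen ρ η}

/-- `𝐃₀″`: functions generated by nondecreasing sequences with `ρ_1 = η_1 ∈ [1/2, 1]`
and `ρ_n + η_m ≤ n + m` for all `n, m ≥ 1`. -/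
def D0'' : Set (ℤ → ℝ) :=
  {f | ∃ ρ η : ℕ → ℝ,
    (∀ n : ℕ, 1 ≤ n → ρ n ≤ ρ (n + 1)) ∧ (∀ n : ℕ, 1 ≤ n → η n ≤ η (n + 1)) ∧
    ρ 1 = η 1 ∧ (1 / 2 : ℝ) ≤ ρ 1 ∧ ρ 1 ≤ 1 ∧
    (∀ n m : ℕ, 1 ≤ n → 1 ≤ m → ρ n + η m ≤ (n : ℝ) + m) ∧ f = gen ρ η}

lemma gen_shift (ρ η : ℕ → ℝ) (c : ℝ) :
    gen (fun n => ρ n + c) (fun n => η n - c) = gen ρ η := by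
  funext n
  unfold gen
  split_ifs <;> ring

/-- The two parametrizations generate the same set of functions:
`𝐃₀′ = 𝐃₀″`. -/
theorem stmt18 : D0' = D0'' := by
  ext f
  simp only [D0', D0'', Set.mem_setOf_eq]
  constructor
  · rintro ⟨ρ, η, hρ, hη, hρn, hηn, h1, rfl⟩
    set c : ℝ := (η 1 - ρ 1) / 2 with hc
    refine ⟨fun n => ρ n + c, fun n => η n - c, ?_, ?_, by ring, ?_, ?_, ?_,
      (gen_shift ρ η c).symm⟩
    · intro n hn; have := hρ n hn; dsimp only; linarith
    · intro n hn; have := hη n hn; dsimp only; linarith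
    · dsimp only; linarith
    · have h2 := hρn 1 le_rfl
      have h3 := hηn 1 le_rfl
      push_cast at h2 h3
      dsimp only; linarith
    · intro n m hn hm
      have h2 := hρn n hn
      have h3 := hηn m hm
      dsimp only; linarith
  · rintro ⟨ρ, η, hρ, hη, he, h2, h3, hnm, rfl⟩
    set S : Set ℝ := (fun m : ℕ => η m - m) '' {m | 1 ≤ m} with hS
    have hne : S.Nonempty := ⟨η 1 - 1, ⟨1, by simp, by push_cast; ring⟩⟩
    have hbdd : BddAbove S := by
      refine ⟨1 - ρ 1, ?_⟩
      rintro x ⟨m, hm, rfl⟩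
      have := hnm 1 m le_rfl hm
      push_cast at this ⊢
      linarith
    set c : ℝ := sSup S with hc
    refine ⟨fun n => ρ n + c, fun n => η n - c, ?_, ?_, ?_, ?_, ?_,
      (gen_shift ρ η c).symm⟩
    · intro n hn; have := hρ n hn; dsimp only; linarith
    · intro n hn; have := hη n hn; dsimp only; linarith
    · intro n hn
      have hle : c ≤ (n : ℝ) - ρ n := by
        apply csSup_le hne
        rintro x ⟨m, hm, rfl⟩
        have := hnm n m hn hm
        dsimp only; linarith
      dsimp only; linarith
    · intro n hn
      have hle : η n - (n : ℝ) ≤ c := le_csSup hbdd ⟨n, hn, rfl⟩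
      dsimp only; linarith
    · dsimp only; linarith
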